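/- If A is an affine (finitely generated) commutative C-algebra with nonzero derivation δ and A[z] is Poisson primitive for the bracket {−,−}_δ, then A is δ-primitive. -/

import Mathlib

/-!
If `I` is a nonzero `δ`-ideal of `A`, its extension `I A[z]` is a nonzero Poisson ideal, because
`{A, A} = 0` and `{z, a} = δ a` make `{f, i} ∈ I A[z]` for every `f ∈ A[z]` and `i ∈ I`.
Hence if the maximal ideal `N` of `A[z]` contains no nonzero Poisson ideal, its contraction
`N ∩ A`, which is maximal because `A` is a Jacobson ring, contains no nonzero `δ`-ideal.
-/

open Polynomial

/-- A Poisson bracket on a commutative `ℂ`-algebra `B`. -/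
structure IsPoissonBracket {B : Type*} [CommRing B] [Algebra ℂ B]
    (br : B → B → B) : Prop where
  add_left : ∀ a b c : B, br (a + b) c = br a c + br b c
  smul_left : ∀ (r : ℂ) (a b : B), br (r • a) b = r • br a b
  antisymm : ∀ a b : B, br a b = - br b a
  jacobi : ∀ a b c : B, br a (br b c) + br b (br c a) + br c (br a b) = 0
  leibniz : ∀ a b c : B, br a (b * c) = br a b * c + b * br a c

/-- The Poisson bracket `{-,-}_δ` on `A[z]`: zero on `A` and `{z,a} = δ a`. -/
def IsDeltaBracket {A : Type*} [CommRing A] [Algebra ℂ A] (δ : Derivation ℂ A A)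
    (br : Polynomial A → Polynomial A → Polynomial A) : Prop :=
  IsPoissonBracket br ∧ (∀ a b : A, br (Polynomial.C a) (Polynomial.C b) = 0) ∧
    (∀ a : A, br Polynomial.X (Polynomial.C a) = Polynomial.C (δ a))

/-- `I` is a Poisson ideal for the bracket `br`. -/
def IsPoissonIdeal {B : Type*} [CommRing B] (br : B → B → B) (I : Ideal B) : Prop :=
  ∀ b : B, ∀ i ∈ I, br b i ∈ I

/-- `I` is a `δ`-ideal. -/
def IsDeltaIdeal {A : Type*} [CommRing A] [Algebra ℂ A] (δ : Derivation ℂ A A)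
    (I : Ideal A) : Prop :=
  ∀ a ∈ I, δ a ∈ I

/-- `P` is a `δ`-prime ideal. -/
def IsDeltaPrime {A : Type*} [CommRing A] [Algebra ℂ A] (δ : Derivation ℂ A A)
    (P : Ideal A) : Prop :=
  P ≠ ⊤ ∧ IsDeltaIdeal δ P ∧
    ∀ I J : Ideal A, IsDeltaIdeal δ I → IsDeltaIdeal δ J → I * J ≤ P → I ≤ P ∨ J ≤ P

namespace IsPoissonBracket

variable {B : Type*} [CommRing B] [Algebra ℂ B] {br : B → B → B}

theorem add_right (hbr : IsPoissonBracket br) (a b c : B) :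
    br a (b + c) = br a b + br a c := by
  rw [hbr.antisymm a (b + c), hbr.add_left, hbr.antisymm b a, hbr.antisymm c a]
  ring

theorem zero_right (hbr : IsPoissonBracket br) (a : B) : br a 0 = 0 := by
  simpa using hbr.add_right a 0 0

theorem leibniz_left (hbr : IsPoissonBracket br) (a b c : B) :
    br (a * b) c = br a c * b + a * br b c := by
  rw [hbr.antisymm (a * b) c, hbr.leibniz, hbr.antisymm a c, hbr.antisymm b c]
  ring

theorem isPoissonIdeal_span (hbr : IsPoissonBracket br) {S : Set B}
    (hS : ∀ b, ∀ s ∈ S, br b s ∈ Ideal.span S) : IsPoissonIdeal br (Ideal.span S) := by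
  intro b x hx
  induction hx using Submodule.span_induction with
  | mem s hs => exact hS b s hs
  | zero => simpa only [hbr.zero_right] using (Ideal.span S).zero_mem
  | add y z _ _ hy hz => simpa only [hbr.add_right] using Ideal.add_mem _ hy hz
  | smul g y hy hby =>
    rw [smul_eq_mul, hbr.leibniz]
    exact Ideal.add_mem _ (Ideal.mul_mem_left _ _ hy) (Ideal.mul_mem_left _ _ hby)

end IsPoissonBracket

namespace IsDeltaBracket

variable {A : Type*} [CommRing A] [Algebra ℂ A] {δ : Derivation ℂ A A}
  {br : A[X] → A[X] → A[X]} {I : Ideal A}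

theorem bracket_C_mem_map (hbr : IsDeltaBracket δ br) (hI : IsDeltaIdeal δ I) {i : A}
    (hi : i ∈ I) (f : A[X]) : br f (C i) ∈ I.map C := by
  obtain ⟨hP, hCC, hXC⟩ := hbr
  induction f using Polynomial.induction_on with
  | C a => rw [hCC]; exact zero_mem _
  | add p q hp hq => rw [hP.add_left]; exact add_mem hp hq
  | monomial n a hn =>
    rw [pow_succ, ← mul_assoc, hP.leibniz_left, hXC]
    exact add_mem (Ideal.mul_mem_right _ _ hn)
      (Ideal.mul_mem_left _ _ (Ideal.mem_map_of_mem _ (hI i hi)))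

theorem isPoissonIdeal_map_C (hbr : IsDeltaBracket δ br) (hI : IsDeltaIdeal δ I) :
    IsPoissonIdeal br (I.map C) :=
  hbr.1.isPoissonIdeal_span fun f _ ⟨_, hi, hs⟩ => hs ▸ hbr.bracket_C_mem_map hI hi f

end IsDeltaBracket

theorem stmt_14_general {A : Type*} [CommRing A] [Algebra ℂ A] [Algebra.FiniteType ℂ A]
    (δ : Derivation ℂ A A)
    (br : Polynomial A → Polynomial A → Polynomial A) (hbr : IsDeltaBracket δ br)
    (hPprim : ∃ N : Ideal (Polynomial A), N.IsMaximal ∧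
      ∀ I : Ideal (Polynomial A), IsPoissonIdeal br I → I ≠ ⊥ → ¬ I ≤ N) :
    ∃ M : Ideal A, M.IsMaximal ∧
      ∀ I : Ideal A, IsDeltaIdeal δ I → I ≠ ⊥ → ¬ I ≤ M := by
  have : IsJacobsonRing A := isJacobsonRing_of_finiteType (A := ℂ)
  obtain ⟨N, hN, hNprim⟩ := hPprim
  refine ⟨N.comap C, isMaximal_comap_C_of_isJacobsonRing N, fun I hI hI0 hIN => ?_⟩
  exact hNprim (I.map C) (hbr.isPoissonIdeal_map_C hI)
    ((Ideal.map_eq_bot_iff_of_injective C_injective).not.mpr hI0)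
    (Ideal.map_le_iff_le_comap.mpr hIN)

theorem stmt_14 {A : Type*} [CommRing A] [Algebra ℂ A] [Algebra.FiniteType ℂ A]
    (δ : Derivation ℂ A A) (hδ : δ ≠ 0)
    (br : Polynomial A → Polynomial A → Polynomial A) (hbr : IsDeltaBracket δ br)
    (hPprim : ∃ N : Ideal (Polynomial A), N.IsMaximal ∧
      ∀ I : Ideal (Polynomial A), IsPoissonIdeal br I → I ≠ ⊥ → ¬ I ≤ N) :
    ∃ M : Ideal A, M.IsMaximal ∧
      ∀ I : Ideal A, IsDeltaIdeal δ I → I ≠ ⊥ → ¬ I ≤ M :=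
  stmt_14_general δ br hbr hPprim
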